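/- arXiv:2303.02548 — 2 statements merged into one kernel-verified Lean document; each statement's English description precedes it below -/
import Mathlib

section
/- Let G be a c-edge-colored multigraph, c ≥ 3, in which every vertex is incident to at least two edges of different colors and at least one vertex is incident to at least three edges of pairwise different colors. If δ_dym(x) + δ_dym(y) ≥ n + 1 for every pair of distinct vertices x and y (where n = |V(G)|), then G has a properly colored hamiltonian cycle. -/
/-- A loopless multigraph whose edges are colored by vertices of a graph `H`
(given by the adjacency relation `adjH` on the color type `C`). -/
structure HCMultigraph (V C : Type) where
  E : Type
  ends : E → Sym2 V
  loopless : ∀ e, ¬ (ends e).IsDiag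
  col : E → C

namespace HCMultigraph

variable {V C : Type} (adjH : C → C → Prop) (M : HCMultigraph V C)

/-- `E_{uv}`: the set of edges of `M` with end vertices `u` and `v`. -/
def EdgesBetween (u v : V) : Set M.E := {e | M.ends e = s(u, v)}

/-- The neighborhood in `H` of a color. -/
def NH (a : C) : Set C := {b | adjH a b}

/-- `E_{uv}` is a dynamic edge set: it contains two edges whose colors have
incomparable neighborhoods in `H`. -/
def DynamicEdgeSet (u v : V) : Prop :=
  ∃ e ∈ M.EdgesBetween u v, ∃ f ∈ M.EdgesBetween u v,
    ¬ NH adjH (M.col e) ⊆ NH adjH (M.col f) ∧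
    ¬ NH adjH (M.col f) ⊆ NH adjH (M.col e)

/-- The set of edges incident with `u` (vertex set of the auxiliary graph `G_u`). -/
def Incident (u : V) : Set M.E := {e | u ∈ M.ends e}

/-- The auxiliary graph `G_u` (edges incident with `u`, adjacency given by
adjacency of colors in `H`) is a complete multipartite graph with at least `k`
(nonempty) parts. -/
def CompleteMultipartite (k : ℕ) (u : V) : Prop :=
  ∃ p : M.Incident u → ℕ,
    (∀ a b : M.Incident u, a ≠ b →
      (adjH (M.col a.1) (M.col b.1) ↔ p a ≠ p b)) ∧
    k ≤ (Set.range p).ncard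

/-- The dynamic degree of `u`: the number of vertices `v` such that `E_{uv}` is a
dynamic edge set. -/
noncomputable def dynDegree (u : V) : ℕ := {v | M.DynamicEdgeSet adjH u v}.ncard

/-- An `H`-path of length `k`: distinct vertices `x 0, …, x k`, edges
`e i ∈ E_{x i, x (i+1)}`, consecutive edge colors adjacent in `H`. -/
def IsHPath (k : ℕ) (x : ℕ → V) (e : ℕ → M.E) : Prop :=
  (∀ i ≤ k, ∀ j ≤ k, x i = x j → i = j) ∧
  (∀ i < k, e i ∈ M.EdgesBetween (x i) (x (i + 1))) ∧
  (∀ i, i + 1 < k → adjH (M.col (e i)) (M.col (e (i + 1))))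

/-- An `H`-cycle of length `k + 1`: distinct vertices `x 0, …, x k`, edges
`e i ∈ E_{x i, x (i+1)}` and `e k ∈ E_{x k, x 0}`, with consecutive edge colors
(cyclically) adjacent in `H`. -/
def IsHCycle (k : ℕ) (x : ℕ → V) (e : ℕ → M.E) : Prop :=
  (∀ i ≤ k, ∀ j ≤ k, x i = x j → i = j) ∧
  (∀ i < k, e i ∈ M.EdgesBetween (x i) (x (i + 1))) ∧
  e k ∈ M.EdgesBetween (x k) (x 0) ∧
  (∀ i < k, adjH (M.col (e i)) (M.col (e (i + 1)))) ∧
  adjH (M.col (e k)) (M.col (e 0))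

/-- A dynamic `H`-cycle with at most one change, on the distinct vertices
`x 0, …, x k` (of length `k + 1`): either a genuine (closed) `H`-cycle, or an
`H`-path closed up with two parallel edges `e k, g ∈ E_{x k, x 0}` (one change). -/
def DynCycleOneChange (k : ℕ) (x : ℕ → V) : Prop :=
  (∀ i ≤ k, ∀ j ≤ k, x i = x j → i = j) ∧
  ∃ e : ℕ → M.E,
    (∀ i < k, e i ∈ M.EdgesBetween (x i) (x (i + 1))) ∧
    e k ∈ M.EdgesBetween (x k) (x 0) ∧
    (∀ i < k, adjH (M.col (e i)) (M.col (e (i + 1)))) ∧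
    (adjH (M.col (e k)) (M.col (e 0)) ∨
      ∃ g ∈ M.EdgesBetween (x k) (x 0), adjH (M.col g) (M.col (e 0)))

end HCMultigraph

open HCMultigraph


/-!
Let `D` be the graph of dynamic edge sets, so that `d_D(x) + d_D(y) ≥ n + 1` for all `x ≠ y`.
This Ore-type condition puts every edge of `D` on a hamiltonian cycle of `D`: by downward
induction on `D`, using Ore's crossing argument to close hamiltonian paths while keeping a
prescribed edge.

Along a hamiltonian cycle of `D` the edges can be colored greedily, since every dynamic edge set
offers a color different from the previous one; closing up only fails if the last edge offers
no color besides that of the closing edge and one other. If this happens at every rotation, all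
edges of the cycle use the same two colors `c₁, c₂`. A dynamic edge set `pq` with a third color is
then a chord, and crossing the cycle at `pq` yields a hamiltonian cycle of `D` in which an edge
colored from `{c₁, c₂}` precedes `pq`, so greedy coloring succeeds. Without such a chord, the
vertex `u` with three colors has an edge `γ` of a third color to some `w`, the edge `uw` of
`D ⊔ uw` lies on a hamiltonian cycle, and its other edges, colored from `{c₁, c₂}`, close up
with `γ`.
-/

section ClosedChain

variable {α : Type*} {r : α → α → Prop}

def IsClosedChain (r : α → α → Prop) (l : List α) : Prop :=
  l.IsChain r ∧ ∀ a ∈ l.getLast?, ∀ b ∈ l.head?, r a b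

theorem IsClosedChain.append_comm {l₁ l₂ : List α} (h : IsClosedChain r (l₁ ++ l₂)) :
    IsClosedChain r (l₂ ++ l₁) := by
  obtain rfl | h₁ := eq_or_ne l₁ []
  · simpa using h
  obtain rfl | h₂ := eq_or_ne l₂ []
  · simpa using h
  obtain ⟨hc, hclose⟩ := h
  rw [List.isChain_append] at hc
  simp only [List.getLast?_append_of_ne_nil _ h₂, List.head?_append_of_ne_nil _ h₁] at hclose
  refine ⟨List.isChain_append.mpr ⟨hc.2.1, hc.1, hclose⟩, ?_⟩
  simpa only [List.getLast?_append_of_ne_nil _ h₁, List.head?_append_of_ne_nil _ h₂] using hc.2.2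

theorem IsClosedChain.isRotated {l l' : List α} (h : IsClosedChain r l) (hl : l ~r l') :
    IsClosedChain r l' := by
  obtain ⟨n, rfl⟩ := hl
  obtain rfl | hne := eq_or_ne l []
  · simpa using h
  rw [← List.rotate_mod,
    List.rotate_eq_drop_append_take (Nat.mod_lt _ (List.length_pos_iff.mpr hne)).le]
  rw [← List.take_append_drop (n % l.length) l] at h
  exact h.append_comm

theorem IsClosedChain.reverse (hr : ∀ a b, r a b → r b a) {l : List α} (h : IsClosedChain r l) :
    IsClosedChain r l.reverse := by
  refine ⟨List.isChain_reverse.mpr (h.1.imp fun a b hab => hr a b hab), ?_⟩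
  simp only [List.getLast?_reverse, List.head?_reverse]
  exact fun a ha b hb => hr b a (h.2 b hb a ha)

theorem isClosedChain_of_forall_rotate {l : List α}
    (h : ∀ k, ∀ a ∈ (l.rotate k).getLast?, ∀ b ∈ (l.rotate k).head?, r a b) :
    IsClosedChain r l := by
  refine ⟨List.isChain_iff_forall_rel_of_append_cons_cons.mpr fun x y l₁ l₂ hl => ?_, by
    simpa using h 0⟩
  have hrot : l.rotate (l₁ ++ [x]).length = (y :: l₂) ++ (l₁ ++ [x]) := by
    rw [hl, show l₁ ++ x :: y :: l₂ = (l₁ ++ [x]) ++ y :: l₂ by simp, List.rotate_append_length_eq]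
  exact h _ x (by rw [hrot, ← List.append_assoc, List.getLast?_concat]; rfl) y (by rw [hrot]; rfl)

end ClosedChain

theorem Set.exists_mem_inter_ne_of_subset {α : Type*} {S T U : Set α} (hU : U.Finite)
    (hS : S ⊆ U) (hT : T ⊆ U) (h : U.ncard + 2 ≤ S.ncard + T.ncard) (k : α) :
    ∃ m ∈ S ∩ T, m ≠ k := by
  have hsum := Set.ncard_inter_add_ncard_union S T (hU.subset hS) (hU.subset hT)
  have hunion := Set.ncard_le_ncard (Set.union_subset hS hT) hU
  obtain ⟨m₁, m₂, h₁, h₂, h₁₂⟩ :=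
    (Set.one_lt_ncard_iff ((hU.subset hS).inter_of_left T)).mp (by omega)
  by_cases h : m₁ = k
  · exact ⟨m₂, h₂, fun h' => h₁₂ (h.trans h'.symm)⟩
  · exact ⟨m₁, h₁, h⟩

theorem List.Nodup.length_eq_card {α : Type*} [Fintype α] {l : List α} (hnd : l.Nodup)
    (hmem : ∀ a, a ∈ l) : l.length = Fintype.card α := by
  classical
  rw [← List.toFinset_card_of_nodup hnd, ← Finset.card_univ]
  congr
  ext a
  simpa using hmem a

namespace SimpleGraph

variable {V : Type*} {G H : SimpleGraph V}

def IsHamPath (G : SimpleGraph V) (l : List V) : Prop := l.Nodup ∧ (∀ v, v ∈ l) ∧ l.IsChain G.Adj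

def IsHamCycle (G : SimpleGraph V) (l : List V) : Prop :=
  l.Nodup ∧ (∀ v, v ∈ l) ∧ IsClosedChain G.Adj l

theorem IsHamCycle.isHamPath {l : List V} (h : IsHamCycle G l) : IsHamPath G l :=
  ⟨h.1, h.2.1, h.2.2.1⟩

theorem IsHamCycle.isRotated {l l' : List V} (h : IsHamCycle G l) (hl : l ~r l') :
    IsHamCycle G l' :=
  ⟨hl.nodup_iff.mp h.1, fun v => hl.mem_iff.mp (h.2.1 v), h.2.2.isRotated hl⟩

theorem IsHamCycle.append_comm {l₁ l₂ : List V} (h : IsHamCycle G (l₁ ++ l₂)) :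
    IsHamCycle G (l₂ ++ l₁) :=
  h.isRotated List.isRotated_append

theorem IsHamCycle.reverse {l : List V} (h : IsHamCycle G l) : IsHamCycle G l.reverse :=
  ⟨List.nodup_reverse.mpr h.1, fun v => List.mem_reverse.mpr (h.2.1 v),
    h.2.2.reverse fun _ _ hab => hab.symm⟩

theorem IsHamPath.isHamCycle_take_append_reverse_drop {l : List V} (hl : IsHamPath G l) {m : ℕ}
    (hm : m ≠ 0) (hml : m < l.length) (hv : ∀ v ∈ l[m]?, ∀ a ∈ l.head?, G.Adj v a)
    (hw : ∀ w ∈ l[m - 1]?, ∀ b ∈ l.getLast?, G.Adj w b) :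
    IsHamCycle G (l.take m ++ (l.drop m).reverse) := by
  obtain ⟨hnd, hmem, hch⟩ := hl
  have hperm : (l.take m ++ (l.drop m).reverse).Perm l := by
    conv_rhs => rw [← List.take_append_drop m l]
    exact (List.perm_append_left_iff _).mpr (List.reverse_perm _)
  refine ⟨hperm.nodup_iff.mpr hnd, fun u => hperm.mem_iff.mpr (hmem u),
    List.isChain_append.mpr ⟨hch.take m,
      List.isChain_reverse.mpr ((hch.drop m).imp fun _ _ h => h.symm), ?_⟩, ?_⟩
  · intro x hx y hy
    simp only [List.getLast?_take, hm, if_false, List.head?_reverse, List.getLast?_drop,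
      show ¬ l.length ≤ m by omega] at hx hy
    rw [List.getElem?_eq_getElem (by omega), Option.some_or] at hx
    exact hw x (by rwa [List.getElem?_eq_getElem (by omega)]) y hy
  · intro x hx y hy
    rw [List.getLast?_append_of_ne_nil _ (List.ne_nil_of_length_pos (by simp; omega)),
      List.getLast?_reverse, List.head?_drop] at hx
    rw [List.head?_append_of_ne_nil _ (List.ne_nil_of_length_pos (by simp; omega)),
      List.head?_take, if_neg hm] at hy
    exact hv x hx y hy

theorem isChain_of_isChain_sup_edge {l : List V} {u w : V}
    (h : l.IsChain (G ⊔ edge u w).Adj) (hu : u ∉ l) : l.IsChain G.Adj :=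
  h.imp_of_mem_imp fun a b ha hb hab => hab.resolve_right fun he => by
    obtain ⟨⟨rfl, rfl⟩ | ⟨rfl, rfl⟩, -⟩ := (edge_adj ..).mp he
    exacts [hu ha, hu hb]

theorem isChain_of_isChain_cons_append_sup_edge {u w : V} {m : List V}
    (hnd : (u :: m ++ [w]).Nodup) (hm : m ≠ [])
    (h : (u :: m ++ [w]).IsChain (G ⊔ edge u w).Adj) : (u :: m ++ [w]).IsChain G.Adj := by
  have hw : w ∉ u :: m := fun hw => by simp [List.nodup_append] at hnd; grind
  have hu : u ∉ m ++ [w] := (List.nodup_cons.mp (by simpa using hnd)).1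
  have h₁ := isChain_of_isChain_sup_edge (edge_comm u w ▸ h.left_of_append) hw
  have h₂ := isChain_of_isChain_sup_edge (by simpa using h.tail) hu
  simpa using List.IsChain.append_overlap (l₁ := [u]) h₁ h₂ hm

theorem IsHamCycle.isHamPath_of_sup_edge {P Q : List V} {u w : V}
    (hl : (G ⊔ edge u w).IsHamCycle (P ++ u :: w :: Q)) (hm : Q ++ P ≠ []) :
    G.IsHamPath ((w :: Q) ++ (P ++ [u])) := by
  have hrot : (G ⊔ edge u w).IsHamCycle (w :: (Q ++ P) ++ [u]) := by
    simpa using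
      (show (G ⊔ edge u w).IsHamCycle ((P ++ [u]) ++ w :: Q) by simpa using hl).append_comm
  have hch : (w :: (Q ++ P) ++ [u]).IsChain (G ⊔ edge w u).Adj := by
    rw [edge_comm]
    exact hrot.2.2.1
  rw [show (w :: Q) ++ (P ++ [u]) = w :: (Q ++ P) ++ [u] by simp]
  exact ⟨hrot.1, hrot.2.1, isChain_of_isChain_cons_append_sup_edge hrot.1 hm hch⟩

theorem IsHamCycle.isHamPath_of_chord {A B : List V} {p a q b : V}
    (hC : G.IsHamCycle (p :: (A ++ [a] ++ q :: (B ++ [b])))) (hpq : G.Adj p q) :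
    G.IsHamPath ((A ++ [a, q]) ++ p :: b :: B.reverse) := by
  have hAq : (A ++ [a, q]).IsChain G.Adj := hC.2.2.1.infix ⟨[p], B ++ [b], by simp⟩
  have hBb : (B ++ [b]).IsChain G.Adj := hC.2.2.1.infix ⟨p :: A ++ [a, q], [], by simp⟩
  have hperm :
      ((A ++ [a, q]) ++ p :: b :: B.reverse).Perm (p :: (A ++ [a] ++ q :: (B ++ [b]))) := by
    refine List.perm_middle.trans (List.Perm.cons p ?_)
    simpa using (List.reverse_perm (B ++ [b])).append_left (A ++ [a, q])
  refine ⟨hperm.nodup_iff.mpr hC.1, fun v => hperm.mem_iff.mpr (hC.2.1 v),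
    List.isChain_append.mpr ⟨hAq, List.isChain_cons.mpr ⟨?_, ?_⟩, ?_⟩⟩
  · rintro _ ⟨⟩
    exact (hC.2.2.2 b (by simp [List.getLast?_cons]) p rfl).symm
  · simpa using List.isChain_reverse.mpr (hBb.imp fun _ _ h => h.symm)
  · simp only [List.getLast?_append, List.getLast?_cons_cons, List.getLast?_singleton]
    rintro _ ⟨⟩ _ ⟨⟩
    exact hpq.symm

theorem exists_isHamCycle_top [Fintype V] {x y : V} (hxy : x ≠ y) :
    ∃ l, (⊤ : SimpleGraph V).IsHamCycle l ∧ l.head? = some x ∧ l.getLast? = some y := by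
  classical
  set L := ((Finset.univ.erase x).erase y).toList
  have hnd : (x :: (L ++ [y])).Nodup := by
    simp +contextual [L, List.nodup_append, hxy, Finset.nodup_toList]
  refine ⟨x :: (L ++ [y]), ⟨hnd, fun v => ?_, (List.Pairwise.isChain hnd).imp fun _ _ h => h,
    ?_⟩, rfl, by rw [← List.cons_append, List.getLast?_concat]⟩
  · by_cases hvx : v = x <;> by_cases hvy : v = y <;> simp [L, hvx, hvy]
  · rw [← List.cons_append, List.getLast?_concat]
    rintro _ ⟨⟩ _ ⟨⟩
    exact hxy.symm

section Ore

variable [Fintype V]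

/-- Ore's degree condition with `n + 1` in place of `n`, imposed on every pair of distinct
vertices. -/
def OreCondition (G : SimpleGraph V) : Prop :=
  ∀ x y, x ≠ y → Fintype.card V + 1 ≤ (G.neighborSet x).ncard + (G.neighborSet y).ncard

theorem OreCondition.mono (hG : G.OreCondition) (hle : G ≤ H) : H.OreCondition :=
  fun x y hxy => (hG x y hxy).trans <| add_le_add
    (Set.ncard_le_ncard fun _ hv => hle hv) (Set.ncard_le_ncard fun _ hv => hle hv)

theorem ncard_neighborSet_lt_card (x : V) : (G.neighborSet x).ncard < Fintype.card V := by
  rw [← Nat.card_eq_fintype_card, ← Set.ncard_univ]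
  exact Set.ncard_lt_ncard (Set.ssubset_univ_iff.mpr fun h =>
    G.irrefl (show x ∈ G.neighborSet x from h ▸ Set.mem_univ x))

theorem OreCondition.three_le_card (hG : G.OreCondition) {x y : V} (hxy : x ≠ y) :
    3 ≤ Fintype.card V := by
  have := hG x y hxy
  have := G.ncard_neighborSet_lt_card x
  have := G.ncard_neighborSet_lt_card y
  omega

theorem OreCondition.exists_adj (hG : G.OreCondition) {x y : V} (hxy : x ≠ y) :
    ∃ a b, G.Adj a b := by
  have := hG x y hxy
  by_cases hx : (G.neighborSet x).ncard = 0
  · obtain ⟨b, hb⟩ := Set.nonempty_of_ncard_ne_zero (s := G.neighborSet y) (by omega)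
    exact ⟨y, b, hb⟩
  · obtain ⟨b, hb⟩ := Set.nonempty_of_ncard_ne_zero hx
    exact ⟨x, b, hb⟩

/-- Ore's crossing argument: the positions `m` with `l[m] ~ l[0]` and those with
`l[m - 1] ~ l[n - 1]` lie in `[1, n - 1]` and are at least as many as the two degrees. -/
theorem OreCondition.exists_crossing (hG : G.OreCondition) {l : List V} (hnd : l.Nodup)
    (hmem : ∀ v, v ∈ l) (hl2 : 1 < l.length) (k : ℕ) :
    ∃ m, m ≠ k ∧ m ≠ 0 ∧ m < l.length ∧ (∀ v ∈ l[m]?, ∀ a ∈ l.head?, G.Adj v a) ∧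
      ∀ w ∈ l[m - 1]?, ∀ b ∈ l.getLast?, G.Adj w b := by
  classical
  have hn : l.length = Fintype.card V := hnd.length_eq_card hmem
  set n := l.length
  set a := l[0]
  set b := l[n - 1]
  have hidx : ∀ v, l.idxOf v < n ∧ l[l.idxOf v]'(List.idxOf_lt_length_iff.mpr (hmem v)) = v :=
    fun v => ⟨List.idxOf_lt_length_iff.mpr (hmem v), List.getElem_idxOf _⟩
  have hinj : Function.Injective (l.idxOf ·) := fun v w h => (List.idxOf_inj (hmem v)).mp h
  have hS : (l.idxOf ·) '' G.neighborSet a ⊆ Set.Icc 1 (n - 1) := by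
    rintro _ ⟨v, hv, rfl⟩
    obtain ⟨hlt, hget⟩ := hidx v
    simp only [Set.mem_Icc]
    have : l.idxOf v ≠ 0 := fun h0 => G.ne_of_adj hv (by simp only [a, ← h0, hget])
    exact ⟨by omega, by omega⟩
  have hT : (l.idxOf · + 1) '' G.neighborSet b ⊆ Set.Icc 1 (n - 1) := by
    rintro _ ⟨v, hv, rfl⟩
    obtain ⟨hlt, hget⟩ := hidx v
    simp only [Set.mem_Icc]
    have : l.idxOf v ≠ n - 1 := fun h0 => G.ne_of_adj hv (by simp only [b, ← h0, hget])
    exact ⟨by omega, by omega⟩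
  have hcard := hG a b (fun h => by simp [a, b, hnd.getElem_inj_iff] at h; omega)
  obtain ⟨_, ⟨⟨v, hv, rfl⟩, ⟨w, hw, hwm⟩⟩, hmk⟩ := Set.exists_mem_inter_ne_of_subset
    (Set.finite_Icc _ _) hS hT (by
      rw [Set.ncard_image_of_injective _ hinj,
        Set.ncard_image_of_injective _ (fun v w h => hinj (Nat.succ_injective h))]
      have hI : (Set.Icc 1 (n - 1)).ncard = n - 1 := by simp
      omega) k
  obtain ⟨hvlt, hvget⟩ := hidx v
  obtain ⟨hwlt, hwget⟩ := hidx w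
  simp only at hwm hmk
  refine ⟨_, hmk, by omega, hvlt, ?_, ?_⟩
  · rw [List.getElem?_eq_getElem hvlt, hvget, List.head?_eq_getElem?, List.getElem?_eq_getElem]
    rintro _ ⟨⟩ _ ⟨⟩
    exact hv.symm
  · rw [← hwm, Nat.add_sub_cancel, List.getElem?_eq_getElem hwlt, hwget,
      List.getLast?_eq_getElem?, List.getElem?_eq_getElem (by omega)]
    rintro _ ⟨⟩ _ ⟨⟩
    exact hw.symm

theorem OreCondition.exists_isHamCycle_append_reverse (hG : G.OreCondition) {l : List V}
    (hl : IsHamPath G l) (hl2 : 1 < l.length) (k : ℕ) :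
    ∃ A B, A ++ B = l ∧ A.length ≠ k ∧ IsHamCycle G (A ++ B.reverse) := by
  obtain ⟨m, hmk, hm, hml, hv, hw⟩ := hG.exists_crossing hl.1 hl.2.1 hl2 k
  exact ⟨l.take m, l.drop m, l.take_append_drop m, by simpa [hml.le] using hmk,
    hl.isHamCycle_take_append_reverse_drop hm hml hv hw⟩

/-- Closing the path `P ++ Q` while keeping the edge joining `P` to `Q`: the resulting cycle
runs along `Q` backwards, or along `P`, just before using that edge. -/
theorem OreCondition.exists_isHamCycle_of_isHamPath_append (hG : G.OreCondition)
    {P Q : List V} (hPQ : G.IsHamPath (P ++ Q)) {s t : V} (hs : P.getLast? = some s)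
    (ht : Q.head? = some t) :
    ∃ W, (G.IsHamCycle (W ++ Q.reverse) ∧ W.head? = some s) ∨
      (G.IsHamCycle (W ++ P) ∧ W.head? = some t) := by
  have hP : P ≠ [] := by rintro rfl; simp at hs
  have hQ : Q ≠ [] := by rintro rfl; simp at ht
  have hlen : 1 < (P ++ Q).length := by
    have := List.length_pos_iff.mpr hP
    have := List.length_pos_iff.mpr hQ
    simp only [List.length_append]
    omega
  obtain ⟨X, Y, hXY, hk, hC⟩ := hG.exists_isHamCycle_append_reverse hPQ hlen P.length
  rcases List.append_eq_append_iff.mp hXY with ⟨z, rfl, rfl⟩ | ⟨z, rfl, rfl⟩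
  · have hz : z ≠ [] := by rintro rfl; simp at hk
    refine ⟨z.reverse ++ X, .inl ⟨?_, ?_⟩⟩
    · simpa using (show G.IsHamCycle ((X ++ Q.reverse) ++ z.reverse) by simpa using hC).append_comm
    · rwa [List.head?_append_of_ne_nil _ (by simpa using hz), List.head?_reverse,
        ← List.getLast?_append_of_ne_nil X hz]
  · have hz : z ≠ [] := by rintro rfl; simp at hk
    refine ⟨z ++ Y.reverse, .inr ⟨(show G.IsHamCycle (P ++ (z ++ Y.reverse)) by
      simpa using hC).append_comm, ?_⟩⟩
    rwa [List.head?_append_of_ne_nil _ hz, ← List.head?_append_of_ne_nil _ hz]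

/-- Downward induction on `G`: a cycle through `xy` in `G ⊔ edge c d` that uses the new edge is
cut there, and the resulting hamiltonian path of `G` is closed again keeping `xy`. -/
theorem OreCondition.exists_isHamCycle_head?_getLast? (hG : G.OreCondition) {x y : V}
    (hxy : G.Adj x y) :
    ∃ l, G.IsHamCycle l ∧ l.head? = some x ∧ l.getLast? = some y := by
  induction G using WellFoundedGT.induction with
  | _ G ih =>
  by_cases htop : G = ⊤
  · subst htop
    exact exists_isHamCycle_top hxy.ne
  obtain ⟨c, d, hcd, hncd⟩ : ∃ c d, c ≠ d ∧ ¬ G.Adj c d := by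
    by_contra! h
    exact htop (eq_top_iff.mpr fun c d hcd => h c d hcd)
  obtain ⟨l, hl, hx, hy⟩ :=
    ih _ (G.lt_sup_edge c d hcd hncd) (hG.mono le_sup_left) (Or.inl hxy)
  by_cases hch : l.IsChain G.Adj
  · refine ⟨l, ⟨hl.1, hl.2.1, hch, ?_⟩, hx, hy⟩
    rw [hx, hy]
    rintro _ ⟨⟩ _ ⟨⟩
    exact hxy.symm
  simp only [List.isChain_iff_forall_rel_of_append_cons_cons, not_forall] at hch
  obtain ⟨u, w, P, Q, rfl, hnuw⟩ := hch
  have hedge : edge c d = edge u w := by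
    have := List.isChain_iff_forall_rel_of_append_cons_cons.mp hl.2.2.1 rfl
    obtain ⟨⟨rfl, rfl⟩ | ⟨rfl, rfl⟩, -⟩ := (edge_adj ..).mp (this.resolve_left hnuw)
    exacts [rfl, edge_comm ..]
  rw [hedge] at hl
  have hm : Q ++ P ≠ [] := by
    intro h
    obtain ⟨rfl, rfl⟩ := List.append_eq_nil_iff.mp h
    have := hl.1.length_eq_card hl.2.1
    have := hG.three_le_card hxy.ne
    simp only [List.nil_append, List.length_cons, List.length_nil] at *
    omega
  have hpath := hl.isHamPath_of_sup_edge hm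
  obtain ⟨W, ⟨hC, hW⟩ | ⟨hC, hW⟩⟩ := hG.exists_isHamCycle_of_isHamPath_append hpath
    (s := y) (t := x) (by simpa using hy) (by simpa using hx)
  · refine ⟨(P ++ [u]) ++ W.reverse, by simpa using hC.reverse, by simpa using hx, ?_⟩
    have hW' : W ≠ [] := by rintro rfl; simp at hW
    rw [List.getLast?_append_of_ne_nil _ (by simpa using hW'), List.getLast?_reverse, hW]
  · refine ⟨W ++ (w :: Q), hC, ?_, by simpa using hy⟩
    rwa [List.head?_append_of_ne_nil _ (by rintro rfl; simp at hW)]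

/-- Cut `C` at the two edges leaving `p` and `q` in the same direction, join the pieces by `pq`
and close up again keeping `pq`; next to `pq` there is still an edge of `C`. -/
theorem OreCondition.exists_isHamCycle_of_chord (hG : G.OreCondition) {r : V → V → Prop}
    (hr : ∀ a b, r a b → r b a) {C : List V} (hC : G.IsHamCycle C) (hCr : IsClosedChain r C)
    {p q : V} (hpq : G.Adj p q) (hnr : ¬ r p q) :
    ∃ l v h x, G.IsHamCycle (l ++ [v]) ∧ l.head? = some h ∧ l.getLast? = some x ∧
      s(v, h) = s(p, q) ∧ r x v := by
  obtain ⟨C₀, C₁, rfl⟩ := List.append_of_mem (hC.2.1 p)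
  have hq : q ∈ C₁ ++ C₀ := by
    have := hC.2.1 q
    simp only [List.mem_append, List.mem_cons] at this ⊢
    have := hpq.ne
    tauto
  obtain ⟨A, B, hAB⟩ := List.append_of_mem hq
  have hrot : (C₀ ++ p :: C₁) ~r (p :: (A ++ q :: B)) := by
    rw [← hAB]
    simpa using (List.isRotated_append (l := C₀) (l' := p :: C₁))
  have hC' := hC.isRotated hrot
  have hCr' := hCr.isRotated hrot
  obtain rfl | ⟨A, a, rfl⟩ := A.eq_nil_or_concat'
  · exact absurd (List.isChain_iff_forall_rel_of_append_cons_cons.mp hCr'.1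
      (l₁ := []) (l₂ := B) (by simp)) hnr
  obtain rfl | ⟨B, b, rfl⟩ := B.eq_nil_or_concat'
  · exact absurd (hr _ _ (hCr'.2 q (by simp [List.getLast?_cons]) p rfl)) hnr
  have hlast : (p :: (A ++ [a] ++ q :: (B ++ [b]))).getLast? = some b := by
    simp [List.getLast?_cons]
  have hraq : r a q := List.isChain_iff_forall_rel_of_append_cons_cons.mp hCr'.1
    (l₁ := p :: A) (l₂ := B ++ [b]) (by simp)
  have hrbp : r b p := hCr'.2 b hlast p rfl
  obtain ⟨W, ⟨hW, hWh⟩ | ⟨hW, hWh⟩⟩ :=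
    hG.exists_isHamCycle_of_isHamPath_append (hC'.isHamPath_of_chord hpq) (s := q) (t := p)
      (by simp) rfl
  · have hW' : W ≠ [] := by rintro rfl; simp at hWh
    refine ⟨W ++ B ++ [b], p, q, b, by simpa using hW, ?_, by simp, rfl, hrbp⟩
    rwa [List.append_assoc, List.head?_append_of_ne_nil _ hW']
  · have hW' : W ≠ [] := by rintro rfl; simp at hWh
    refine ⟨W ++ A ++ [a], q, p, a, by simpa using hW, ?_, by simp, Sym2.eq_swap, hraq⟩
    rwa [List.append_assoc, List.head?_append_of_ne_nil _ hW']

end Ore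

end SimpleGraph

namespace HCMultigraph

variable {V C : Type} (M : HCMultigraph V C)

theorem edgesBetween_comm (u v : V) : M.EdgesBetween u v = M.EdgesBetween v u := by
  ext e
  simp [EdgesBetween, Sym2.eq_swap]

theorem not_mem_edgesBetween_self (u : V) (e : M.E) : e ∉ M.EdgesBetween u u :=
  fun he => M.loopless e (by rw [he]; exact Sym2.mk_isDiag_iff.mpr rfl)

theorem nh_ne_subset_iff {a b : C} : NH (· ≠ ·) a ⊆ NH (· ≠ ·) b ↔ a = b := by
  refine ⟨fun h => ?_, fun h => h ▸ subset_rfl⟩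
  by_contra hab
  exact h (show b ∈ NH (· ≠ ·) a from hab) rfl

theorem dynamicEdgeSet_ne_iff {u v : V} :
    M.DynamicEdgeSet (· ≠ ·) u v ↔
      ∃ e ∈ M.EdgesBetween u v, ∃ f ∈ M.EdgesBetween u v, M.col e ≠ M.col f := by
  simp only [DynamicEdgeSet, nh_ne_subset_iff]
  constructor <;> rintro ⟨e, he, f, hf, h⟩
  exacts [⟨e, he, f, hf, h.1⟩, ⟨e, he, f, hf, h, Ne.symm h⟩]

def dynGraph : SimpleGraph V where
  Adj := M.DynamicEdgeSet (· ≠ ·)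
  symm := ⟨fun u v h => by
    simpa only [dynamicEdgeSet_ne_iff, edgesBetween_comm M u v] using h⟩
  loopless := ⟨fun u h => by
    obtain ⟨e, he, -⟩ := M.dynamicEdgeSet_ne_iff.mp h
    exact M.not_mem_edgesBetween_self u e he⟩

def HasPCHamCycle : Prop :=
  ∃ (k : ℕ) (x : ℕ → V) (e : ℕ → M.E),
    M.IsHCycle (fun a b => a ≠ b) k x e ∧ ∀ v : V, ∃ i ≤ k, x i = v

/-- A properly colored closed walk is encoded as a list of pairs `(x i, e i)`; consecutive
pairs are related by `PCStep`. -/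
def PCStep (p q : V × M.E) : Prop :=
  p.2 ∈ M.EdgesBetween p.1 q.1 ∧ M.col p.2 ≠ M.col q.2

def HasColorAvoiding (x v : V) (c : C) : Prop :=
  ∀ a, ∃ e ∈ M.EdgesBetween x v, M.col e ≠ a ∧ M.col e ≠ c

/-- Enough to color the cyclic sequence `l ++ [v]` greedily from `h` on and to close it with `γ`:
the last edge `xv` can then avoid both the color of `γ` and that of its predecessor. -/
def IsGreedyColorable (L : List V) : Prop :=
  ∃ l v h x γ, L = l ++ [v] ∧ l.head? = some h ∧ l.getLast? = some x ∧
    γ ∈ M.EdgesBetween v h ∧ M.HasColorAvoiding x v (M.col γ)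

variable {M}

theorem exists_col_ne_of_dynGraph_adj {u v : V} (h : M.dynGraph.Adj u v) (a : C) :
    ∃ e ∈ M.EdgesBetween u v, M.col e ≠ a := by
  obtain ⟨e, he, f, hf, hef⟩ := M.dynamicEdgeSet_ne_iff.mp h
  by_cases hea : M.col e = a
  · exact ⟨f, hf, hea ▸ hef.symm⟩
  · exact ⟨e, he, hea⟩

theorem subset_pair_of_not_hasColorAvoiding {x v : V} {c : C} (hxv : M.dynGraph.Adj x v)
    (h : ¬ M.HasColorAvoiding x v c) :
    c ∈ M.col '' M.EdgesBetween x v ∧ ∃ a, M.col '' M.EdgesBetween x v ⊆ {a, c} := by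
  simp only [HasColorAvoiding, not_forall, not_exists, not_and, not_not] at h
  obtain ⟨a, ha⟩ := h
  refine ⟨?_, a, ?_⟩
  · obtain ⟨e, he, f, hf, hef⟩ := M.dynamicEdgeSet_ne_iff.mp hxv
    by_cases hea : M.col e = a
    · exact ⟨f, hf, ha f hf (hea ▸ hef.symm)⟩
    · exact ⟨e, he, ha e he hea⟩
  · rintro _ ⟨e, he, rfl⟩
    by_cases hea : M.col e = a
    · exact .inl hea
    · exact .inr (ha e he hea)

theorem hasPCHamCycle_of_isClosedChain {ws : List (V × M.E)} (hne : ws ≠ [])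
    (hnd : (ws.map Prod.fst).Nodup) (hmem : ∀ v, v ∈ ws.map Prod.fst)
    (hws : IsClosedChain M.PCStep ws) : M.HasPCHamCycle := by
  have h0 : 0 < ws.length := List.length_pos_iff.mpr hne
  set d := ws[0]
  have hget : ∀ i (hi : i < ws.length), ws.getD i d = ws[i] := fun i hi => List.getD_eq_getElem ..
  have hstep : ∀ i (hi : i + 1 < ws.length), M.PCStep ws[i] ws[i + 1] :=
    List.isChain_iff_getElem.mp hws.1
  have hclose : M.PCStep ws[ws.length - 1] ws[0] :=
    hws.2 _ (by rw [List.getLast?_eq_getElem?, List.getElem?_eq_getElem (by omega)]; rfl) _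
      (by rw [List.head?_eq_getElem?, List.getElem?_eq_getElem h0]; rfl)
  refine ⟨ws.length - 1, fun i => (ws.getD i d).1, fun i => (ws.getD i d).2,
    ⟨fun i hi j hj h => ?_, fun i hi => ?_, ?_, fun i hi => ?_, ?_⟩, fun v => ?_⟩
  · dsimp only at h
    rw [hget i (by omega), hget j (by omega)] at h
    exact (hnd.getElem_inj_iff (i := i) (j := j) (hi := by simp; omega)
      (hj := by simp; omega)).mp (by simpa using h)
  · dsimp only
    rw [hget i (by omega), hget (i + 1) (by omega)]
    exact (hstep i (by omega)).1
  · dsimp only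
    rw [hget _ (by omega), hget 0 h0]
    exact hclose.1
  · dsimp only
    rw [hget i (by omega), hget (i + 1) (by omega)]
    exact (hstep i (by omega)).2
  · dsimp only
    rw [hget _ (by omega), hget 0 h0]
    exact hclose.2
  · obtain ⟨i, hi, hv⟩ := List.mem_iff_getElem.mp (hmem v)
    simp only [List.length_map] at hi
    exact ⟨i, by omega, by dsimp only; rw [hget i hi]; simpa using hv⟩

/-- Each edge takes a color different from that of the previous one, which is possible as
dynamic edge sets have two colors; the last edge `xv` also avoids the color of `γ`. -/
theorem exists_pcChain (γ : M.E) (v : V) (l : List V) (a : C)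
    (hl : (l ++ [v]).IsChain M.dynGraph.Adj)
    (hlast : ∀ x ∈ l.getLast?, M.HasColorAvoiding x v (M.col γ)) :
    ∃ ws : List (V × M.E), ws.map Prod.fst = l ∧ (ws ++ [(v, γ)]).IsChain M.PCStep ∧
      ∀ p ∈ ws.head?, M.col p.2 ≠ a := by
  induction l generalizing a with
  | nil => exact ⟨[], rfl, by simp, by simp⟩
  | cons x l ih =>
    cases l with
    | nil =>
      obtain ⟨e, he, hea, heγ⟩ := hlast x rfl a
      exact ⟨[(x, e)], rfl, List.isChain_pair.mpr ⟨he, heγ⟩, by simpa using hea⟩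
    | cons y l =>
      obtain ⟨e, he, hea⟩ := exists_col_ne_of_dynGraph_adj (List.isChain_cons_cons.mp hl).1 a
      obtain ⟨ws, hws, hch, hhead⟩ := ih (M.col e) hl.tail (by simpa using hlast)
      obtain ⟨⟨y', f⟩, ws, rfl⟩ : ∃ p ws', ws = p :: ws' :=
        List.exists_cons_of_ne_nil (by rintro rfl; simp at hws)
      obtain ⟨rfl, -⟩ : y' = y ∧ _ := by simpa using hws
      refine ⟨(x, e) :: (y', f) :: ws, by simpa using hws, ?_, by simpa using hea⟩
      exact List.isChain_cons_cons.mpr ⟨⟨he, fun h => hhead _ rfl h.symm⟩, hch⟩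

theorem hasPCHamCycle_of_isGreedyColorable {L : List V} (hL : M.dynGraph.IsHamPath L)
    (hgreedy : M.IsGreedyColorable L) : M.HasPCHamCycle := by
  obtain ⟨l, v, h, x, γ, rfl, hh, hx, hγ, hanchor⟩ := hgreedy
  obtain ⟨ws, hws, hch, hhead⟩ := exists_pcChain γ v l (M.col γ) hL.2.2
    (by rw [hx]; rintro _ ⟨⟩; exact hanchor)
  obtain ⟨⟨h', e⟩, ws, rfl⟩ : ∃ p ws', ws = p :: ws' :=
    List.exists_cons_of_ne_nil (by rintro rfl; simp [← hws] at hh)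
  obtain rfl : h' = h := by simpa [← hws] using hh
  have hmap : ((((h', e) :: ws) ++ [(v, γ)]).map Prod.fst) = l ++ [v] := by simp [← hws]
  refine hasPCHamCycle_of_isClosedChain (by simp) (hmap ▸ hL.1) (fun u => hmap ▸ hL.2.1 u)
    ⟨hch, ?_⟩
  rw [List.getLast?_concat]
  rintro _ ⟨⟩ _ ⟨⟩
  exact ⟨hγ, fun h => hhead _ rfl h.symm⟩

theorem isGreedyColorable_of_subset {l : List V} {v h x : V} {γ : M.E} {S : Set C}
    (hl : (l ++ [v]).IsChain M.dynGraph.Adj) (hh : l.head? = some h)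
    (hx : l.getLast? = some x) (hγ : γ ∈ M.EdgesBetween v h)
    (hS : M.col '' M.EdgesBetween x v ⊆ S) (hγS : M.col γ ∉ S) :
    M.IsGreedyColorable (l ++ [v]) := by
  refine ⟨l, v, h, x, γ, rfl, hh, hx, hγ, fun a => ?_⟩
  obtain ⟨e, he, hea⟩ :=
    exists_col_ne_of_dynGraph_adj ((List.isChain_append.mp hl).2.2 x hx v rfl) a
  exact ⟨e, he, hea, fun h => hγS (h ▸ hS ⟨e, he, rfl⟩)⟩

/-- If no rotation of a hamiltonian cycle of dynamic edge sets can be colored greedily, then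
along the cycle the colors of each edge are among those of the previous edge, and those of one
edge form a pair. -/
theorem exists_isGreedyColorable_or_isClosedChain {Cy : List V}
    (hC : M.dynGraph.IsHamCycle Cy) (hne : Cy ≠ []) :
    (∃ L, L ~r Cy ∧ M.IsGreedyColorable L) ∨
      ∃ c₁ c₂, IsClosedChain (fun a b => M.col '' M.EdgesBetween a b ⊆ {c₁, c₂}) Cy := by
  refine or_iff_not_imp_left.mpr fun hA => ?_
  have key : ∀ h₀ t, (h₀ :: t) ~r Cy → ∀ x ∈ t.getLast?, ∀ y ∈ t.head?,
      ∀ γ ∈ M.EdgesBetween h₀ y, M.col γ ∈ M.col '' M.EdgesBetween x h₀ ∧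
        ∃ a, M.col '' M.EdgesBetween x h₀ ⊆ {a, M.col γ} := by
    intro h₀ t hrot x hx y hy γ hγ
    have hxh₀ : M.dynGraph.Adj x h₀ :=
      (hC.isRotated hrot.symm).2.2.2 x (by simp [List.getLast?_cons, Option.mem_def.mp hx]) h₀ rfl
    refine subset_pair_of_not_hasColorAvoiding hxh₀ fun hcol => hA ⟨t ++ [h₀], ?_,
      t, h₀, y, x, γ, rfl, hy, hx, hγ, hcol⟩
    exact (List.isRotated_append (l := [h₀]) (l' := t)).symm.trans hrot
  obtain ⟨h₀, t, rfl⟩ := List.exists_cons_of_ne_nil hne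
  have ht : t ≠ [] := by
    rintro rfl
    exact M.dynGraph.irrefl (hC.2.2.2 h₀ rfl h₀ rfl)
  obtain ⟨y, hy⟩ : ∃ y, t.head? = some y := Option.ne_none_iff_exists'.mp (by simpa using ht)
  obtain ⟨x, hx⟩ : ∃ x, t.getLast? = some x := Option.ne_none_iff_exists'.mp (by simpa using ht)
  obtain ⟨γ₀, hγ₀, -⟩ := M.dynamicEdgeSet_ne_iff.mp ((List.isChain_cons.mp hC.2.2.1).1 y hy)
  obtain ⟨-, a, hsub⟩ := key h₀ t (List.IsRotated.refl _) x hx y hy γ₀ hγ₀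
  refine ⟨a, M.col γ₀, isClosedChain_of_forall_rotate fun k => ?_⟩
  induction k with
  | zero =>
    simp only [List.rotate_zero, List.getLast?_cons, hx, Option.getD_some]
    rintro _ ⟨⟩ _ ⟨⟩
    exact hsub
  | succ k ih =>
    obtain ⟨h', t', hk⟩ : ∃ h' t', (h₀ :: t).rotate k = h' :: t' :=
      List.exists_cons_of_ne_nil (by simp)
    have ht' : t' ≠ [] := by
      rintro rfl
      have hlen := congrArg List.length hk
      simp only [List.length_rotate, List.length_cons, List.length_nil, zero_add,
        add_eq_right, List.length_eq_zero_iff] at hlen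
      exact ht hlen
    obtain ⟨y', hy'⟩ : ∃ y, t'.head? = some y :=
      Option.ne_none_iff_exists'.mp (by simpa using ht')
    obtain ⟨x', hx'⟩ : ∃ x, t'.getLast? = some x :=
      Option.ne_none_iff_exists'.mp (by simpa using ht')
    rw [← List.rotate_rotate, hk, List.rotate_cons_succ, List.rotate_zero, List.getLast?_concat,
      List.head?_append_of_ne_nil _ ht', hy']
    rintro _ ⟨⟩ _ ⟨⟩ _ ⟨γ, hγ, rfl⟩
    have hrot : (h' :: t') ~r (h₀ :: t) := hk ▸ List.IsRotated.symm ⟨k, rfl⟩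
    exact ih x' (by simp [hk, List.getLast?_cons, hx']) h' (by rw [hk]; rfl)
      (key h' t' hrot x' hx' y' hy' γ hγ).1

/-- Pick an edge `γ` of a third color at `u`, to `w` say: a hamiltonian cycle of
`dynGraph ⊔ edge u w` through `uw` is colored greedily along its other edges and closed by `γ`. -/
theorem hasPCHamCycle_of_forall_subset_pair [Fintype V] (hG : M.dynGraph.OreCondition)
    {c₁ c₂ : C}
    (hS : ∀ p q, M.dynGraph.Adj p q → M.col '' M.EdgesBetween p q ⊆ {c₁, c₂}) {u : V}
    {e f g : M.E} (he : e ∈ M.Incident u) (hf : f ∈ M.Incident u) (hg : g ∈ M.Incident u)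
    (hef : M.col e ≠ M.col f) (heg : M.col e ≠ M.col g) (hfg : M.col f ≠ M.col g) :
    M.HasPCHamCycle := by
  obtain ⟨γ, hγu, hγS⟩ : ∃ γ ∈ M.Incident u, M.col γ ∉ ({c₁, c₂} : Set C) := by
    by_contra! h
    have := h e he
    have := h f hf
    have := h g hg
    simp only [Set.mem_insert_iff, Set.mem_singleton_iff] at *
    grind
  obtain ⟨w, hw⟩ := Sym2.mem_iff_exists.mp hγu
  have huw : u ≠ w := by
    rintro rfl
    exact M.not_mem_edgesBetween_self u γ hw
  have hnadj : ¬ M.dynGraph.Adj u w := fun h => hγS (hS u w h ⟨γ, hw, rfl⟩)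
  obtain ⟨l, hl, hlu, hlw⟩ := (hG.mono le_sup_left).exists_isHamCycle_head?_getLast?
    (G := M.dynGraph ⊔ SimpleGraph.edge u w)
    (.inr ((SimpleGraph.edge_adj ..).mpr ⟨.inl ⟨rfl, rfl⟩, huw⟩))
  obtain ⟨l, rfl⟩ := List.getLast?_eq_some_iff.mp hlw
  obtain ⟨m, rfl⟩ : ∃ m, l = u :: m := by
    obtain ⟨u', m, rfl⟩ := List.exists_cons_of_ne_nil (l := l) (by rintro rfl; simp_all)
    exact ⟨m, by simp_all⟩
  have hm : m ≠ [] := by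
    rintro rfl
    have := hl.1.length_eq_card hl.2.1
    have := hG.three_le_card huw
    simp only [List.cons_append, List.nil_append, List.length_cons, List.length_nil] at *
    omega
  have hpath : M.dynGraph.IsHamPath (u :: m ++ [w]) :=
    ⟨hl.1, hl.2.1, SimpleGraph.isChain_of_isChain_cons_append_sup_edge hl.1 hm hl.2.2.1⟩
  obtain ⟨x, hx⟩ : ∃ x, (u :: m).getLast? = some x :=
    Option.ne_none_iff_exists'.mp (by simp)
  have hxw : M.dynGraph.Adj x w := (List.isChain_append.mp hpath.2.2).2.2 x hx w rfl
  exact hasPCHamCycle_of_isGreedyColorable hpath <| isGreedyColorable_of_subset hpath.2.2 rfl hx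
    (by rwa [edgesBetween_comm]) (hS x w hxw) hγS

end HCMultigraph

theorem stmt14_general {V : Type} [Fintype V] (c : ℕ)
    (M : HCMultigraph V (Fin c))
    (h3 : ∃ u : V, ∃ e ∈ M.Incident u, ∃ f ∈ M.Incident u, ∃ g ∈ M.Incident u,
      M.col e ≠ M.col f ∧ M.col e ≠ M.col g ∧ M.col f ≠ M.col g)
    (hOre : ∀ x y : V, x ≠ y →
      Fintype.card V + 1 ≤
        M.dynDegree (fun a b => a ≠ b) x + M.dynDegree (fun a b => a ≠ b) y) :
    ∃ (k : ℕ) (x : ℕ → V) (e : ℕ → M.E),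
      M.IsHCycle (fun a b => a ≠ b) k x e ∧ ∀ v : V, ∃ i ≤ k, x i = v := by
  have hG : M.dynGraph.OreCondition := hOre
  obtain ⟨u, e, he, f, hf, g, hg, hef, heg, hfg⟩ := h3
  obtain ⟨w, hw⟩ := Sym2.mem_iff_exists.mp he
  obtain ⟨a, b, hab⟩ := hG.exists_adj (x := u) (y := w) fun h =>
    M.not_mem_edgesBetween_self u e (h ▸ hw)
  obtain ⟨Cy, hC, hCa, -⟩ := hG.exists_isHamCycle_head?_getLast? hab
  rcases exists_isGreedyColorable_or_isClosedChain hC (by rintro rfl; simp at hCa) with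
    ⟨L, hrot, hL⟩ | ⟨c₁, c₂, hbad⟩
  · exact hasPCHamCycle_of_isGreedyColorable (hC.isRotated hrot.symm).isHamPath hL
  by_cases hE : ∃ p q, M.dynGraph.Adj p q ∧ ∃ γ ∈ M.EdgesBetween p q,
      M.col γ ∉ ({c₁, c₂} : Set (Fin c))
  · obtain ⟨p, q, hpq, γ, hγ, hγS⟩ := hE
    obtain ⟨l, v, h, x, hl, hh, hx, hvh, hxv⟩ := hG.exists_isHamCycle_of_chord
      (fun a b hab => by rwa [edgesBetween_comm]) hC hbad hpq fun hS => hγS (hS ⟨γ, hγ, rfl⟩)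
    exact hasPCHamCycle_of_isGreedyColorable hl.isHamPath <| isGreedyColorable_of_subset
      hl.2.2.1 hh hx (by rw [EdgesBetween, hvh]; exact hγ) hxv hγS
  · simp only [not_exists, not_and, not_not] at hE
    exact hasPCHamCycle_of_forall_subset_pair hG
      (fun p q hpq => by rintro _ ⟨γ, hγ, rfl⟩; exact hE p q hpq γ hγ) he hf hg hef heg hfg

theorem stmt14 {V : Type} [Fintype V] (c : ℕ) (hc : 3 ≤ c)
    (M : HCMultigraph V (Fin c))
    (h2 : ∀ u : V, ∃ e ∈ M.Incident u, ∃ f ∈ M.Incident u, M.col e ≠ M.col f)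
    (h3 : ∃ u : V, ∃ e ∈ M.Incident u, ∃ f ∈ M.Incident u, ∃ g ∈ M.Incident u,
      M.col e ≠ M.col f ∧ M.col e ≠ M.col g ∧ M.col f ≠ M.col g)
    (hOre : ∀ x y : V, x ≠ y →
      Fintype.card V + 1 ≤
        M.dynDegree (fun a b => a ≠ b) x + M.dynDegree (fun a b => a ≠ b) y) :
    ∃ (k : ℕ) (x : ℕ → V) (e : ℕ → M.E),
      M.IsHCycle (fun a b => a ≠ b) k x e ∧ ∀ v : V, ∃ i ≤ k, x i = v :=
  stmt14_general c M h3 hOre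
end

section
/- Let G be an H-colored multigraph such that for every vertex u, G_u is a complete multipartite graph with at least 2 parts, and let T = (x_0, ..., x_k) be a path of maximum length among paths in which every consecutive edge set E_{x_i x_{i+1}} is a dynamic edge set. If δ_dym(u) ≥ d for every vertex u, then k ≥ d, and moreover every vertex v such that E_{x_0 v} is a dynamic edge set lies on T. -/
open HCMultigraph

theorem stmt18 {V C : Type} (adjH : C → C → Prop) (hsym : Symmetric adjH)
    (M : HCMultigraph V C)
    [Fintype V]
    (hmp : ∀ u : V, M.CompleteMultipartite adjH 2 u)
    (d : ℕ) (hdeg : ∀ u : V, d ≤ M.dynDegree adjH u)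
    (k : ℕ) (x : ℕ → V)
    (hpath : (∀ i ≤ k, ∀ j ≤ k, x i = x j → i = j) ∧
      ∀ i < k, M.DynamicEdgeSet adjH (x i) (x (i + 1)))
    (hmax : ∀ (k' : ℕ) (x' : ℕ → V),
      ((∀ i ≤ k', ∀ j ≤ k', x' i = x' j → i = j) ∧
        ∀ i < k', M.DynamicEdgeSet adjH (x' i) (x' (i + 1))) → k' ≤ k) :
    d ≤ k ∧ ∀ v : V, M.DynamicEdgeSet adjH (x 0) v → ∃ i ≤ k, x i = v := by
  obtain ⟨hinj, hdyn⟩ := hpath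
  have hx0 : ¬ M.DynamicEdgeSet adjH (x 0) (x 0) := by
    rintro ⟨e, he, -⟩
    exact M.loopless e (by rw [he]; exact Sym2.mk_isDiag_iff.mpr rfl)
  have onT : ∀ v : V, M.DynamicEdgeSet adjH (x 0) v → ∃ i ≤ k, x i = v := by
    intro v hv
    by_contra hnot
    push_neg at hnot
    set x' : ℕ → V := fun i => if i = 0 then v else x (i - 1) with hx'
    have key : (∀ i ≤ k + 1, ∀ j ≤ k + 1, x' i = x' j → i = j) ∧
        ∀ i < k + 1, M.DynamicEdgeSet adjH (x' i) (x' (i + 1)) := by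
      constructor
      · intro i hi j hj hij
        match i, j with
        | 0, 0 => rfl
        | 0, j + 1 =>
          simp only [hx'] at hij
          exact absurd hij.symm (hnot j (by omega))
        | i + 1, 0 =>
          simp only [hx'] at hij
          exact absurd hij (hnot i (by omega))
        | i + 1, j + 1 =>
          simp only [hx', Nat.add_sub_cancel] at hij
          have := hinj i (by omega) j (by omega) hij
          omega
      · intro i hi
        match i with
        | 0 =>
          have h0 : x' 0 = v := by simp [hx']
          have h1 : x' 1 = x 0 := by simp [hx']
          rw [h0, h1]
          obtain ⟨e, he, f, hf, h1', h2'⟩ := hv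
          refine ⟨e, ?_, f, ?_, h1', h2'⟩
          · show M.ends e = s(v, x 0)
            rw [he, Sym2.eq_swap]
          · show M.ends f = s(v, x 0)
            rw [hf, Sym2.eq_swap]
        | i + 1 =>
          have h0 : x' (i + 1) = x i := by simp [hx']
          have h1 : x' (i + 2) = x (i + 1) := by simp [hx']
          rw [h0, h1]
          exact hdyn i (by omega)
    have := hmax (k + 1) x' key
    omega
  refine ⟨?_, onT⟩
  have hsub : {v | M.DynamicEdgeSet adjH (x 0) v} ⊆ x '' Set.Icc 1 k := by
    intro v hv
    obtain ⟨i, hik, hxi⟩ := onT v hv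
    have hi0 : i ≠ 0 := by
      rintro rfl
      exact hx0 (hxi ▸ hv)
    exact ⟨i, ⟨by omega, hik⟩, hxi⟩
  have h1 : {v | M.DynamicEdgeSet adjH (x 0) v}.ncard ≤ (x '' Set.Icc 1 k).ncard :=
    Set.ncard_le_ncard hsub ((Set.finite_Icc 1 k).image x)
  have h2 : (x '' Set.Icc 1 k).ncard ≤ (Set.Icc 1 k).ncard :=
    Set.ncard_image_le (Set.finite_Icc 1 k)
  have h3 : (Set.Icc 1 k : Set ℕ).ncard = k := by
    rw [Set.ncard_eq_toFinset_card' , Set.toFinset_Icc, Nat.card_Icc]; omega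
  have h4 := hdeg (x 0)
  unfold HCMultigraph.dynDegree at h4
  omega
end
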